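/- (Jacobi triple product form of Ramanujan's theta function) For complex numbers a, b with |ab| < 1, ∑_{n=-∞}^∞ a^{n(n+1)/2} b^{n(n-1)/2} = (-a; ab)_∞ (-b; ab)_∞ (ab; ab)_∞, where (x; q)_∞ = ∏_{n=0}^∞ (1 - x q^n). -/

import Mathlib

open Filter Finset Topology

/-- q-Pochhammer infinite product `(x; q)_∞ = ∏_{n≥0} (1 - x qⁿ)`. -/
noncomputable def qPoch (x q : ℂ) : ℂ := ∏' n : ℕ, (1 - x * q ^ n)

/-- Compatibility: the complex absolute value as the norm, bundled as an `AbsoluteValue`. -/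
noncomputable def Complex.abs : AbsoluteValue ℂ ℝ := NormedField.toAbsoluteValue ℂ

lemma Complex.norm_eq_abs (z : ℂ) : ‖z‖ = Complex.abs z := rfl

lemma Complex.continuous_abs : Continuous Complex.abs := continuous_norm

namespace JTP

noncomputable def D (q : ℂ) (N : ℕ) : ℂ := ∏ j ∈ range N, (1 - q ^ (j + 1))
noncomputable def c (q : ℂ) (m k : ℕ) : ℂ := if k ≤ m then D q m / (D q k * D q (m - k)) else 0
noncomputable def term (a b : ℂ) (n : ℤ) : ℂ := a ^ (n * (n + 1) / 2) * b ^ (n * (n - 1) / 2)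
noncomputable def B0 (r : ℝ) : ℝ := Real.exp (-(r / (1 - r) ^ 2))
noncomputable def M (r : ℝ) : ℝ := Real.exp (r / (1 - r)) / B0 r ^ 2

-- from t3.lean
lemma one_sub_pow_ne {q : ℂ} (hq : Complex.abs q < 1) (j : ℕ) : 1 - q ^ (j + 1) ≠ 0 := by
  intro h
  have h1 : q ^ (j + 1) = 1 := by linear_combination -h
  have : Complex.abs q ^ (j + 1) < 1 := by
    calc Complex.abs q ^ (j+1) ≤ Complex.abs q ^ 1 :=
      pow_le_pow_of_le_one (Complex.abs.nonneg q) hq.le (by omega)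
    _ < 1 := by simpa using hq
  rw [← map_pow, h1] at this; simp at this

lemma multipliable_one_add {g : ℕ → ℂ} (hg : Summable g) :
    Multipliable (fun n => 1 + g n) := by
  by_cases hz : ∃ n, 1 + g n = 0
  · obtain ⟨n0, hn0⟩ := hz
    refine ⟨0, ?_⟩
    rw [HasProd]
    have : ∀ᶠ s : Finset ℕ in atTop, ∏ i ∈ s, (1 + g i) = 0 := by
      filter_upwards [Filter.eventually_ge_atTop ({n0} : Finset ℕ)] with s hs
      exact Finset.prod_eq_zero (hs (Finset.mem_singleton_self n0)) hn0
    change Tendsto (fun s : Finset ℕ => ∏ i ∈ s, (1 + g i)) atTop (𝓝 0)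
    rw [Filter.tendsto_congr' this]
    exact tendsto_const_nhds
  · push_neg at hz
    have hlog : Summable fun n => Complex.log (1 + g n) := by
      have h0 : Tendsto g atTop (𝓝 0) := hg.tendsto_atTop_zero
      have hev : ∀ᶠ n in atTop, ‖Complex.log (1 + g n)‖ ≤ (3/2) * ‖g n‖ := by
        have h0' : Tendsto (fun n => ‖g n‖) atTop (𝓝 0) := by simpa using h0.norm
        filter_upwards [h0'.eventually_le_const (by norm_num : (0:ℝ) < 1/2)] with n hn
        · exact Complex.norm_log_one_add_half_le_self (by simpa using hn)
      exact (Summable.of_norm_bounded_eventually_nat (hg.norm.mul_left (3/2)) hev)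
    exact Complex.multipliable_one_add_of_summable hg


lemma two_mul_tri (n : ℤ) : 2 * (n * (n - 1) / 2) = n * (n - 1) := by
  have h : (2:ℤ) ∣ n * (n - 1) := by
    have := Int.even_mul_succ_self (n - 1)
    simpa [mul_comm, sub_add_cancel] using this.two_dvd
  exact Int.mul_ediv_cancel' h

lemma two_mul_tri' (n : ℤ) : 2 * (n * (n + 1) / 2) = n * (n + 1) := by
  have h : (2:ℤ) ∣ n * (n + 1) := (Int.even_mul_succ_self n).two_dvd
  exact Int.mul_ediv_cancel' h

lemma D_ne {q : ℂ} (hq : Complex.abs q < 1) (N : ℕ) : D q N ≠ 0 :=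
  Finset.prod_ne_zero_iff.2 fun j _ => one_sub_pow_ne hq j

lemma tendsto_prod_one_add {g : ℕ → ℂ} (hg : Summable g) :
    Tendsto (fun N => ∏ j ∈ range N, (1 + g j)) atTop (𝓝 (∏' n, (1 + g n))) :=
  (multipliable_one_add hg).hasProd.tendsto_prod_nat

-- from t4
lemma D_zero (q : ℂ) : D q 0 = 1 := rfl
lemma D_succ (q : ℂ) (N : ℕ) : D q (N + 1) = D q N * (1 - q ^ (N + 1)) := Finset.prod_range_succ _ _

lemma c_zero {q : ℂ} (hq : Complex.abs q < 1) (m : ℕ) : c q m 0 = 1 := by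
  simp [c, D_zero, div_self (D_ne hq m), D_ne hq m]

lemma c_self {q : ℂ} (hq : Complex.abs q < 1) (m : ℕ) : c q m m = 1 := by
  simp [c, D_zero, div_self (D_ne hq m), D_ne hq m]

lemma c_gt (q : ℂ) {m k : ℕ} (h : m < k) : c q m k = 0 := by simp [c, Nat.not_le.2 h]

lemma c_pascal {q : ℂ} (hq : Complex.abs q < 1) (m k : ℕ) (hk : k ≤ m) :
    c q (m + 1) (k + 1) = q ^ (k + 1) * c q m (k + 1) + c q m k := by
  rcases eq_or_lt_of_le hk with rfl | hlt
  · rw [c_self hq, c_self hq, c_gt q (Nat.lt_succ_self k), mul_zero, zero_add]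
  · -- k < m, so k + 1 ≤ m
    have hk1 : k + 1 ≤ m := hlt
    have e1 : m + 1 - (k + 1) = m - k := by omega
    have e2 : m - (k + 1) = m - k - 1 := by omega
    rw [c, c, c, if_pos (by omega), if_pos hk1, if_pos hk, e1, e2]
    have hmk : m - k = (m - k - 1) + 1 := by omega
    rw [D_succ q m, hmk, D_succ q (m - k - 1), D_succ q k]
    set u := q ^ (k + 1) with hu
    set v := q ^ (m - k - 1 + 1) with hv
    have huv : q ^ (m + 1) = u * v := by rw [hu, hv, ← pow_add]; congr 1; omega
    rw [huv]
    have h1 := D_ne hq m; have h2 := D_ne hq k; have h3 := D_ne hq (m - k - 1)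
    have h4 : (1 - u) ≠ 0 := sub_ne_zero.2 (by intro h; exact (D_ne hq (k+1)) (by rw [D_succ, ← hu, ← h]; simp [← h]))
    have h5 : (1 - v) ≠ 0 := sub_ne_zero.2 (by intro h; exact (D_ne hq (m-k-1+1)) (by rw [D_succ, ← hv, ← h]; simp [← h]))
    rw [Nat.add_sub_cancel]
    field_simp
    ring

-- from t5.lean
lemma tri_succ (k : ℕ) : (k+1)*((k+1)-1)/2 = k*(k-1)/2 + k := by
  cases k with
  | zero => rfl
  | succ j =>
    obtain ⟨cc, hc⟩ : 2 ∣ (j+1)*j := by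
      rcases Nat.even_mul_succ_self j with ⟨t, ht⟩
      exact ⟨t, by rw [mul_comm]; omega⟩
    have h2 : (j+1+1)*((j+1+1)-1) = 2*(cc + (j+1)) := by
      simp only [Nat.add_sub_cancel]
      have h3 : (j+1+1)*(j+1) = (j+1)*j + 2*(j+1) := by ring
      omega
    simp only [Nat.add_sub_cancel] at *
    rw [h2, hc, Nat.mul_div_cancel_left _ (by norm_num : 0 < 2),
      Nat.mul_div_cancel_left _ (by norm_num : 0 < 2)]

lemma gauss {q : ℂ} (hq : Complex.abs q < 1) (m : ℕ) (x : ℂ) :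
    ∏ j ∈ range m, (1 + x * q ^ j) = ∑ k ∈ range (m + 1), c q m k * q ^ (k * (k - 1) / 2 : ℕ) * x ^ k := by
  induction m generalizing x with
  | zero => simp [c_zero hq]
  | succ m IH =>
    have step : ∏ j ∈ range (m+1), (1 + x * q^j)
        = (∏ j ∈ range m, (1 + (x*q) * q^j)) * (1 + x) := by
      rw [Finset.prod_range_succ']
      congr 1
      · exact Finset.prod_congr rfl fun j _ => by ring
      · simp
    rw [step, IH (x*q)]
    rw [Finset.sum_range_succ' (fun k => c q (m+1) k * q ^ (k*(k-1)/2) * x ^ k)]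
    have hT : ∀ k, c q m k * q ^ (k*(k-1)/2) * (x*q) ^ k
        = c q m k * q ^ ((k+1)*((k+1)-1)/2) * x ^ k := by
      intro k; rw [tri_succ, pow_add, mul_pow]; ring
    rw [Finset.sum_congr rfl fun k _ => hT k]
    have hP : ∀ k ∈ range (m+1), c q (m+1) (k+1) * q ^ ((k+1)*((k+1)-1)/2) * x ^ (k+1)
        = c q m (k+1) * q ^ ((k+2)*((k+2)-1)/2) * x ^ (k+1)
          + (c q m k * q ^ ((k+1)*((k+1)-1)/2) * x ^ k) * x := by
      intro k hk
      rw [c_pascal hq m k (by simpa using Nat.lt_succ_iff.mp (mem_range.mp hk))]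
      rw [tri_succ (k+1), pow_add]
      ring
    rw [Finset.sum_congr rfl hP, Finset.sum_add_distrib]
    rw [Finset.sum_range_succ (fun k => c q m (k+1) * q ^ ((k+2)*((k+2)-1)/2) * x ^ (k+1))]
    rw [c_gt q (Nat.lt_succ_self m)]
    have hS : ∑ k ∈ range (m+1), c q m k * q ^ ((k+1)*((k+1)-1)/2) * x ^ k
        = (∑ k ∈ range m, c q m (k+1) * q ^ ((k+2)*((k+2)-1)/2) * x ^ (k+1)) + 1 := by
      rw [Finset.sum_range_succ' (fun k => c q m k * q ^ ((k+1)*((k+1)-1)/2) * x ^ k)]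
      simp [c_zero hq]
    rw [hS, c_zero hq]
    rw [← Finset.sum_mul]
    rw [hS]
    ring

-- from t7.lean
lemma prod_zpow_sum (q : ℂ) (hq : q ≠ 0) (f : ℕ → ℤ) (s : Finset ℕ) :
    ∏ i ∈ s, q ^ (f i) = q ^ (∑ i ∈ s, f i) := by
  classical
  induction s using Finset.induction with
  | empty => simp
  | insert i s h ih => rw [Finset.prod_insert h, Finset.sum_insert h, ih, ← zpow_add₀ hq]

lemma cast_tri (k : ℕ) : ((k*(k-1)/2 : ℕ) : ℤ) = (k:ℤ)*((k:ℤ)-1)/2 := by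
  cases k with
  | zero => simp
  | succ j => push_cast [Nat.succ_sub_one]; congr 1; ring

lemma term_eq {a b : ℂ} (ha : a ≠ 0) (hb : b ≠ 0) (n : ℤ) :
    term a b n = a ^ n * (a*b) ^ (n * (n - 1) / 2) := by
  have h1 := two_mul_tri n
  have h2 := two_mul_tri' n
  have h3 : n * (n+1) = n * (n-1) + 2 * n := by ring
  have hE : n * (n + 1) / 2 = n + n * (n - 1) / 2 := by linarith
  rw [term, hE, zpow_add₀ ha, mul_zpow]
  ring

lemma key {a b : ℂ} (ha : a ≠ 0) (hb : b ≠ 0) (hab : Complex.abs (a * b) < 1) (N : ℕ) :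
    (∑ k ∈ range (2 * N + 1), c (a * b) (2 * N) k * term a b ((k : ℤ) - N)) =
      (∏ j ∈ range N, (1 + a * (a * b) ^ j)) * (∏ j ∈ range N, (1 + b * (a * b) ^ j)) := by
  set q : ℂ := a * b with hqdef
  have hq0 : q ≠ 0 := mul_ne_zero ha hb
  set E : ℤ := ∑ i ∈ range N, ((i : ℤ) - N) with hE
  have h2E : 2 * E = -((N:ℤ) * (N + 1)) := by
    rw [hE, Finset.mul_sum]
    have : ∀ i ∈ range N, (2:ℤ) * ((i:ℤ) - N) = 2 * i - 2 * N := fun i _ => by ring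
    rw [Finset.sum_congr rfl this, Finset.sum_sub_distrib]
    have hgs : (∑ i ∈ range N, (2:ℤ) * i) = (N:ℤ) * (N - 1) := by
      have := Finset.sum_range_id_mul_two N
      have hc : ((∑ i ∈ range N, i) * 2 : ℕ) = ((N * (N-1) : ℕ)) := this
      have := congrArg (Nat.cast (R := ℤ)) hc
      push_cast at this
      rcases Nat.eq_zero_or_pos N with h | h
      · simp [h]
      · rw [Nat.cast_sub h] at this; push_cast at this
        calc (∑ i ∈ range N, (2:ℤ)*i) = (∑ i ∈ range N, (i:ℤ)) * 2 := by rw [Finset.sum_mul]; exact Finset.sum_congr rfl fun i _ => by ring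
        _ = (N:ℤ) * (N - 1) := this
    rw [hgs]
    simp [Finset.sum_const]
    ring
  -- the Gauss identity with x = a * q^(-N)
  have G := gauss hab (2*N) (a * q ^ (-(N:ℤ)))
  -- rewrite the product side
  have hfac : ∀ j : ℕ, 1 + (a * q ^ (-(N:ℤ))) * q ^ j = 1 + a * q ^ ((j:ℤ) - N) := by
    intro j
    rw [mul_assoc, ← zpow_natCast q j, ← zpow_add₀ hq0]
    ring_nf
  have hsplit : ∏ j ∈ range (2*N), (1 + (a * q ^ (-(N:ℤ))) * q ^ j)
      = q ^ E * a ^ N * ((∏ j ∈ range N, (1 + b * q ^ j)) * (∏ j ∈ range N, (1 + a * q ^ j))) := by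
    rw [Finset.prod_congr rfl fun j _ => hfac j]
    rw [two_mul, Finset.prod_range_add]
    have hsecond : ∏ i ∈ range N, (1 + a * q ^ (((N + i : ℕ) : ℤ) - N)) = ∏ i ∈ range N, (1 + a * q ^ i) := by
      refine Finset.prod_congr rfl fun i _ => ?_
      have : ((N + i : ℕ) : ℤ) - N = (i : ℤ) := by push_cast; ring
      rw [this, zpow_natCast]
    have hfirst : ∏ i ∈ range N, (1 + a * q ^ ((i:ℤ) - N))
        = q ^ E * a ^ N * ∏ j ∈ range N, (1 + b * q ^ j) := by
      have hstep : ∀ i ∈ range N, 1 + a * q ^ ((i:ℤ) - N)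
          = q ^ ((i:ℤ) - N) * (a * (1 + b * q ^ (N - 1 - i : ℕ))) := by
        intro i hi
        have hiN := mem_range.mp hi
        have hcast : ((N - 1 - i : ℕ) : ℤ) = (N:ℤ) - 1 - i := by omega
        have hone : q ^ ((i:ℤ) - N) * (a * (b * q ^ (N - 1 - i : ℕ))) = 1 := by
          rw [← zpow_natCast q (N - 1 - i), hcast]
          have hmid : a * (b * q ^ ((N:ℤ) - 1 - i)) = q ^ ((1:ℤ) + ((N:ℤ) - 1 - i)) := by
            rw [zpow_add₀ hq0, zpow_one, hqdef]; ring
          rw [hmid, ← zpow_add₀ hq0,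
            show (i:ℤ) - N + (1 + ((N:ℤ) - 1 - i)) = 0 by ring, zpow_zero]
        calc 1 + a * q ^ ((i:ℤ) - N)
            = q ^ ((i:ℤ) - N) * (a * (b * q ^ (N - 1 - i : ℕ))) + a * q ^ ((i:ℤ) - N) := by rw [hone]
          _ = q ^ ((i:ℤ) - N) * (a * (1 + b * q ^ (N - 1 - i : ℕ))) := by ring
      rw [Finset.prod_congr rfl hstep, Finset.prod_mul_distrib, Finset.prod_mul_distrib,
        prod_zpow_sum q hq0, ← hE, Finset.prod_const, Finset.card_range,
        show (∏ i ∈ range N, (1 + b * q ^ (N - 1 - i : ℕ))) = ∏ j ∈ range N, (1 + b * q ^ j)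
          from Finset.prod_range_reflect (fun j => 1 + b * q ^ j) N]
      ring
    rw [hsecond, hfirst]
    ring
  -- rewrite the sum side, termwise
  have hterm : ∀ k ∈ range (2*N+1),
      c q (2*N) k * q ^ (k*(k-1)/2 : ℕ) * (a * q ^ (-(N:ℤ))) ^ k
        = q ^ E * a ^ N * (c q (2*N) k * term a b ((k:ℤ) - N)) := by
    intro k _
    rw [term_eq ha hb, ← hqdef]
    have hexp : ((k*(k-1)/2 : ℕ) : ℤ) + (-(N:ℤ))*(k:ℤ) = E + ((k:ℤ)-N)*(((k:ℤ)-N)-1)/2 := by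
      rw [cast_tri]
      have h1 := two_mul_tri ((k:ℤ) - N)
      have h2 := two_mul_tri (k:ℤ)
      have h3 : ((k:ℤ)-N) * (((k:ℤ)-N)-1) = (k:ℤ)*((k:ℤ)-1) - 2*N*k + N*(N+1) := by ring
      linarith
    have haexp : a ^ ((N:ℤ)) * a ^ ((k:ℤ) - N) = a ^ ((k:ℤ)) := by
      rw [← zpow_add₀ ha]; congr 1; ring
    calc c q (2*N) k * q ^ (k*(k-1)/2 : ℕ) * (a * q ^ (-(N:ℤ))) ^ k
        = c q (2*N) k * (a ^ ((k:ℤ)) * (q ^ (((k*(k-1)/2:ℕ) : ℕ) : ℤ) * q ^ ((-(N:ℤ))*(k:ℤ)))) := by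
          rw [mul_pow a (q ^ (-(N:ℤ))) k, ← zpow_natCast q (k*(k-1)/2 : ℕ), ← zpow_natCast a k,
            ← zpow_natCast (q ^ (-(N:ℤ))) k, ← zpow_mul]
          ring
      _ = c q (2*N) k * (a ^ ((N:ℤ)) * a ^ ((k:ℤ)-N) * (q ^ E * q ^ (((k:ℤ)-N)*(((k:ℤ)-N)-1)/2))) := by
          rw [haexp, ← zpow_add₀ hq0, ← zpow_add₀ hq0, hexp]
      _ = q ^ E * a ^ N * (c q (2*N) k * (a ^ ((k:ℤ)-N) * q ^ (((k:ℤ)-N)*(((k:ℤ)-N)-1)/2))) := by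
          rw [← zpow_natCast a N]; ring
  rw [hsplit, Finset.sum_congr rfl hterm, ← Finset.mul_sum] at G
  have hcan : q ^ E * a ^ N ≠ 0 := mul_ne_zero (zpow_ne_zero _ hq0) (pow_ne_zero _ ha)
  have h := mul_left_cancel₀ hcan G
  exact h.symm.trans (mul_comm _ _)

-- from t8.lean
lemma sum_pow_le {r : ℝ} (h0 : 0 ≤ r) (h1 : r < 1) (N : ℕ) :
    ∑ j ∈ range N, r ^ (j + 1) ≤ r / (1 - r) := by
  have hgeom : ∑ j ∈ range N, r ^ j ≤ (1 - r)⁻¹ := by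
    calc ∑ j ∈ range N, r ^ j ≤ ∑' j : ℕ, r ^ j :=
      (summable_geometric_of_lt_one h0 h1).sum_le_tsum _ (fun j _ => pow_nonneg h0 j)
    _ = (1 - r)⁻¹ := tsum_geometric_of_lt_one h0 h1
  calc ∑ j ∈ range N, r ^ (j + 1) = r * ∑ j ∈ range N, r ^ j := by
        rw [Finset.mul_sum]; exact Finset.sum_congr rfl fun j _ => by ring
    _ ≤ r * (1 - r)⁻¹ := by apply mul_le_mul_of_nonneg_left hgeom h0
    _ = r / (1 - r) := by rw [div_eq_mul_inv]

lemma prod_one_add_le {r : ℝ} (h0 : 0 ≤ r) (h1 : r < 1) (N : ℕ) :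
    ∏ j ∈ range N, (1 + r ^ (j + 1)) ≤ Real.exp (r / (1 - r)) := by
  calc ∏ j ∈ range N, (1 + r ^ (j + 1)) ≤ ∏ j ∈ range N, Real.exp (r ^ (j + 1)) := by
        apply Finset.prod_le_prod (fun j _ => by positivity)
          (fun j _ => by linarith [Real.add_one_le_exp (r ^ (j+1))])
    _ = Real.exp (∑ j ∈ range N, r ^ (j + 1)) := by rw [Real.exp_sum]
    _ ≤ Real.exp (r / (1 - r)) := Real.exp_le_exp.2 (sum_pow_le h0 h1 N)

lemma prod_one_sub_ge {r : ℝ} (h0 : 0 ≤ r) (h1 : r < 1) (N : ℕ) :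
    Real.exp (-(r / (1 - r) ^ 2)) ≤ ∏ j ∈ range N, (1 - r ^ (j + 1)) := by
  have hfac : ∀ j : ℕ, Real.exp (-(r ^ (j + 1) / (1 - r))) ≤ 1 - r ^ (j + 1) := by
    intro j
    set x := r ^ (j + 1) with hx
    have hx0 : 0 ≤ x := pow_nonneg h0 _
    have hxr : x ≤ r := by
      calc x ≤ r ^ 1 := pow_le_pow_of_le_one h0 h1.le (by omega)
      _ = r := pow_one r
    have h1r : 0 < 1 - r := by linarith
    have hkey := Real.add_one_le_exp (x / (1 - r))
    have hpos : 0 < Real.exp (x / (1 - r)) := Real.exp_pos _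
    have hid : (1 - x) * (x / (1 - r) + 1) - 1 = x * (r - x) / (1 - r) := by
      field_simp; ring
    have h2 : 1 ≤ (1 - x) * Real.exp (x / (1 - r)) := by
      have hge : 0 ≤ x * (r - x) / (1 - r) := div_nonneg (mul_nonneg hx0 (by linarith)) (by linarith)
      nlinarith [mul_le_mul_of_nonneg_left hkey (by linarith : (0:ℝ) ≤ 1 - x)]
    rw [Real.exp_neg]
    rw [inv_le_iff_one_le_mul₀ hpos]
    linarith [h2]
  have h1r : 0 < 1 - r := by linarith
  have hsum : ∑ j ∈ range N, r ^ (j + 1) / (1 - r) ≤ r / (1 - r) ^ 2 := by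
    rw [← Finset.sum_div]
    calc (∑ j ∈ range N, r ^ (j+1)) / (1 - r) ≤ (r / (1 - r)) / (1 - r) := by
          gcongr
          exact sum_pow_le h0 h1 N
      _ = r / (1 - r) ^ 2 := by rw [div_div, sq]
  calc Real.exp (-(r / (1 - r) ^ 2)) ≤ Real.exp (∑ j ∈ range N, -(r ^ (j+1) / (1 - r))) := by
        apply Real.exp_le_exp.2
        rw [Finset.sum_neg_distrib, neg_le_neg_iff]
        exact hsum
    _ = ∏ j ∈ range N, Real.exp (-(r ^ (j+1) / (1 - r))) := Real.exp_sum _ _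
    _ ≤ ∏ j ∈ range N, (1 - r ^ (j + 1)) :=
        Finset.prod_le_prod (fun j _ => (Real.exp_pos _).le) (fun j _ => hfac j)

-- from t9.lean
lemma absD_le {q : ℂ} (hq : Complex.abs q < 1) (N : ℕ) :
    Complex.abs (D q N) ≤ Real.exp (Complex.abs q / (1 - Complex.abs q)) := by
  set r := Complex.abs q with hr
  rw [D, map_prod]
  calc ∏ j ∈ range N, Complex.abs (1 - q ^ (j+1)) ≤ ∏ j ∈ range N, (1 + r ^ (j+1)) := by
        apply Finset.prod_le_prod (fun j _ => AbsoluteValue.nonneg _ _) fun j _ => ?_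
        calc Complex.abs (1 - q ^ (j+1)) ≤ Complex.abs 1 + Complex.abs (q ^ (j+1)) :=
              AbsoluteValue.sub_le_add _ _ _
        _ = 1 + r ^ (j+1) := by rw [map_one, map_pow]
    _ ≤ _ := prod_one_add_le (AbsoluteValue.nonneg _ _) hq N

lemma absD_ge {q : ℂ} (hq : Complex.abs q < 1) (N : ℕ) :
    B0 (Complex.abs q) ≤ Complex.abs (D q N) := by
  set r := Complex.abs q with hr
  rw [D, map_prod, B0]
  calc Real.exp (-(r / (1 - r) ^ 2)) ≤ ∏ j ∈ range N, (1 - r ^ (j+1)) :=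
        prod_one_sub_ge (AbsoluteValue.nonneg _ _) hq N
    _ ≤ ∏ j ∈ range N, Complex.abs (1 - q ^ (j+1)) := by
        apply Finset.prod_le_prod
        · intro j _
          have hp : r ^ (j+1) < 1 := pow_lt_one₀ (AbsoluteValue.nonneg _ _) hq (by omega)
          linarith
        · intro j _
          have h1 : Complex.abs (q ^ (j+1)) = r ^ (j+1) := by rw [map_pow]
          have h2 := Complex.abs.le_sub 1 (q ^ (j+1))
          rw [map_one, h1] at h2
          exact h2

lemma B0_pos (r : ℝ) : 0 < B0 r := Real.exp_pos _

lemma absc_le {q : ℂ} (hq : Complex.abs q < 1) (m k : ℕ) :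
    Complex.abs (c q m k) ≤ M (Complex.abs q) := by
  set r := Complex.abs q with hr
  have hB := B0_pos r
  rcases le_or_gt k m with h | h
  · rw [c, if_pos h, map_div₀, map_mul]
    calc Complex.abs (D q m) / (Complex.abs (D q k) * Complex.abs (D q (m - k)))
        ≤ Real.exp (r / (1 - r)) / (B0 r * B0 r) := by
          gcongr
          · exact absD_le hq m
          · exact absD_ge hq k
          · exact absD_ge hq (m - k)
      _ = M r := by rw [M, sq]
  · rw [c, if_neg (Nat.not_le.2 h), map_zero, M, B0]
    positivity

-- from t10.lean
lemma summable_xq {q : ℂ} (hq : Complex.abs q < 1) (x : ℂ) : Summable (fun n : ℕ => x * q ^ n) :=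
  (summable_geometric_of_norm_lt_one (by rwa [Complex.norm_eq_abs])).mul_left x

lemma tendsto_A {q : ℂ} (hq : Complex.abs q < 1) (x : ℂ) :
    Tendsto (fun N => ∏ j ∈ range N, (1 + x * q ^ j)) atTop (𝓝 (qPoch (-x) q)) := by
  have h : qPoch (-x) q = ∏' n, (1 + x * q ^ n) := by
    rw [qPoch]; congr 1; funext n; ring
  rw [h]
  exact tendsto_prod_one_add (summable_xq hq x)

lemma tendsto_D {q : ℂ} (hq : Complex.abs q < 1) :
    Tendsto (D q) atTop (𝓝 (qPoch q q)) := by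
  have h : qPoch q q = ∏' n, (1 + (-q) * q ^ n) := by
    rw [qPoch]; congr 1; funext n; ring
  have h2 : ∀ N, D q N = ∏ j ∈ range N, (1 + (-q) * q ^ j) := by
    intro N; rw [D]; exact Finset.prod_congr rfl fun j _ => by rw [pow_succ]; ring
  rw [h, funext h2]
  exact tendsto_prod_one_add (summable_xq hq (-q))

lemma qq_ne {q : ℂ} (hq : Complex.abs q < 1) : qPoch q q ≠ 0 := by
  have h1 : Tendsto (fun N => Complex.abs (D q N)) atTop (𝓝 (Complex.abs (qPoch q q))) :=
    (Complex.continuous_abs.tendsto _).comp (tendsto_D hq)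
  have h2 : B0 (Complex.abs q) ≤ Complex.abs (qPoch q q) :=
    ge_of_tendsto' h1 (fun N => absD_ge hq N)
  intro h
  rw [h, map_zero] at h2
  exact absurd h2 (not_le.2 (Real.exp_pos _))

-- ratio recurrence
lemma term_succ {a b : ℂ} (ha : a ≠ 0) (hb : b ≠ 0) (n : ℕ) :
    term a b ((n : ℤ) + 1) = (a * (a*b) ^ n) * term a b n := by
  rw [term_eq ha hb, term_eq ha hb]
  have hq0 : a * b ≠ 0 := mul_ne_zero ha hb
  have h1 := two_mul_tri ((n:ℤ) + 1)
  have h2 := two_mul_tri (n:ℤ)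
  have h3 : ((n:ℤ)+1) * (((n:ℤ)+1) - 1) = (n:ℤ)*((n:ℤ)-1) + 2*n := by ring
  have hE : ((n:ℤ)+1) * (((n:ℤ)+1) - 1) / 2 = (n:ℤ) + ((n:ℤ)*((n:ℤ)-1)/2) := by
    linarith
  rw [hE, zpow_add₀ ha, zpow_add₀ hq0, zpow_one, zpow_natCast (a*b) n, zpow_natCast a n]
  ring

lemma term_neg (a b : ℂ) (n : ℤ) : term a b (-n) = term b a n := by
  have e1 : (-n) * (-n + 1) / 2 = n * (n - 1) / 2 := by
    rw [show (-n) * (-n + 1) = n * (n - 1) from by ring]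
  have e2 : (-n) * (-n - 1) / 2 = n * (n + 1) / 2 := by
    rw [show (-n) * (-n - 1) = n * (n + 1) from by ring]
  rw [term, term, e1, e2]; ring

-- from t11.lean
lemma M_pos (r : ℝ) : 0 < M r := by rw [M, B0]; positivity

lemma summable_term_nat {a b : ℂ} (ha : a ≠ 0) (hb : b ≠ 0) (hab : Complex.abs (a * b) < 1) :
    Summable (fun n : ℕ => Complex.abs (term a b n)) := by
  apply summable_of_ratio_norm_eventually_le (r := 1/2) (by norm_num)
  have h0 : Tendsto (fun n : ℕ => Complex.abs a * Complex.abs (a*b) ^ n) atTop (𝓝 0) := by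
    have := (tendsto_pow_atTop_nhds_zero_of_lt_one (AbsoluteValue.nonneg _ _) hab).const_mul
      (Complex.abs a)
    simpa using this
  filter_upwards [h0.eventually_le_const (by norm_num : (0:ℝ) < 1/2)] with n hn
  have hs : term a b ((n:ℤ) + 1) = (a * (a*b) ^ n) * term a b n := term_succ ha hb n
  have hcast : ((n+1 : ℕ) : ℤ) = (n : ℤ) + 1 := by push_cast; ring
  rw [Real.norm_of_nonneg (AbsoluteValue.nonneg _ _), Real.norm_of_nonneg (AbsoluteValue.nonneg _ _),
    hcast, hs, map_mul, map_mul, map_pow]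
  calc Complex.abs a * Complex.abs (a*b) ^ n * Complex.abs (term a b n)
      ≤ 1/2 * Complex.abs (term a b n) :=
        mul_le_mul_of_nonneg_right hn (AbsoluteValue.nonneg _ _)
    _ = _ := by norm_num

lemma summable_abs_term {a b : ℂ} (ha : a ≠ 0) (hb : b ≠ 0) (hab : Complex.abs (a * b) < 1) :
    Summable (fun n : ℤ => Complex.abs (term a b n)) := by
  rw [summable_int_iff_summable_nat_and_neg]
  constructor
  · exact summable_term_nat ha hb hab
  · have : ∀ n : ℕ, Complex.abs (term a b (-(n:ℤ))) = Complex.abs (term b a n) := by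
      intro n; rw [term_neg]
    rw [funext this]
    exact summable_term_nat hb ha (by rwa [mul_comm])

theorem jacobi_ne {a b : ℂ} (ha : a ≠ 0) (hb : b ≠ 0) (hab : Complex.abs (a * b) < 1) :
    (∑' n : ℤ, term a b n)
      = qPoch (-a) (a * b) * qPoch (-b) (a * b) * qPoch (a * b) (a * b) := by
  classical
  set q : ℂ := a * b with hqdef
  set Pi : ℂ := qPoch q q with hPi
  have hPi0 : Pi ≠ 0 := qq_ne hab
  set F : ℕ → ℤ → ℂ := fun N n =>
    if -(N:ℤ) ≤ n ∧ n ≤ (N:ℤ) then c q (2*N) ((n + N).toNat) * term a b n else 0 with hF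
  -- finite evaluation
  have h1 : ∀ N, (∑' n : ℤ, F N n)
      = (∏ j ∈ range N, (1 + a * q ^ j)) * (∏ j ∈ range N, (1 + b * q ^ j)) := by
    intro N
    have hvanish : ∀ n ∉ Finset.Icc (-(N:ℤ)) N, F N n = 0 := by
      intro n hn
      rw [Finset.mem_Icc] at hn
      simp only [hF]; exact if_neg (by omega)
    rw [tsum_eq_sum hvanish, ← key ha hb hab N]
    apply Finset.sum_nbij' (i := fun n => (n + (N:ℤ)).toNat) (j := fun k => (k : ℤ) - N)
    · intro n hn; rw [Finset.mem_Icc] at hn; rw [Finset.mem_range]; omega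
    · intro k hk; rw [Finset.mem_range] at hk; rw [Finset.mem_Icc]; omega
    · intro n hn; rw [Finset.mem_Icc] at hn; omega
    · intro k hk; rw [Finset.mem_range] at hk; omega
    · intro n hn
      rw [Finset.mem_Icc] at hn
      simp only [hF]
      rw [if_pos (by omega : -(N:ℤ) ≤ n ∧ n ≤ (N:ℤ))]
      have : ((n + (N:ℤ)).toNat : ℤ) - N = n := by omega
      rw [this]
  -- pointwise limits
  have h2 : ∀ n : ℤ, Tendsto (fun N => F N n) atTop (𝓝 (Pi⁻¹ * term a b n)) := by
    intro n
    have t1 : Tendsto (fun N : ℕ => 2*N) atTop atTop :=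
      tendsto_atTop_atTop.2 fun K => ⟨K, fun N hN => by omega⟩
    have t2 : Tendsto (fun N : ℕ => (n + (N:ℤ)).toNat) atTop atTop :=
      tendsto_atTop_atTop.2 fun K => ⟨K + n.natAbs, fun N hN => by omega⟩
    have t3 : Tendsto (fun N : ℕ => ((N:ℤ) - n).toNat) atTop atTop :=
      tendsto_atTop_atTop.2 fun K => ⟨K + n.natAbs, fun N hN => by omega⟩
    have hdiv : Tendsto (fun N => D q (2*N) / (D q ((n + (N:ℤ)).toNat) * D q (((N:ℤ) - n).toNat))
        * term a b n) atTop (𝓝 (Pi / (Pi * Pi) * term a b n)) := by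
      exact ((((tendsto_D hab).comp t1).div
        ((((tendsto_D hab).comp t2)).mul ((tendsto_D hab).comp t3))
        (mul_ne_zero hPi0 hPi0)).mul_const _)
    have heq : ∀ᶠ N : ℕ in atTop, D q (2*N) / (D q ((n + (N:ℤ)).toNat) * D q (((N:ℤ) - n).toNat))
        * term a b n = F N n := by
      filter_upwards [eventually_ge_atTop n.natAbs] with N hN
      simp only [hF]
      rw [if_pos (by omega : -(N:ℤ) ≤ n ∧ n ≤ (N:ℤ))]
      rw [c, if_pos (by omega : (n + (N:ℤ)).toNat ≤ 2*N)]
      have : 2*N - (n + (N:ℤ)).toNat = ((N:ℤ) - n).toNat := by omega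
      rw [this]
    have hval : Pi / (Pi * Pi) = Pi⁻¹ := by field_simp
    rw [hval] at hdiv
    exact Tendsto.congr' heq hdiv
  -- bound
  have h3 : ∀ (N : ℕ) (n : ℤ), ‖F N n‖ ≤ M (Complex.abs q) * Complex.abs (term a b n) := by
    intro N n
    simp only [hF]
    by_cases h : -(N:ℤ) ≤ n ∧ n ≤ (N:ℤ)
    · rw [if_pos h, Complex.norm_eq_abs, map_mul]
      exact mul_le_mul_of_nonneg_right (absc_le hab _ _) (AbsoluteValue.nonneg _ _)
    · rw [if_neg h, norm_zero]
      exact mul_nonneg (M_pos _).le (AbsoluteValue.nonneg _ _)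
  -- Tannery
  have hbound : Summable (fun n : ℤ => M (Complex.abs q) * Complex.abs (term a b n)) :=
    (summable_abs_term ha hb hab).mul_left _
  have htan : Tendsto (fun N => ∑' n : ℤ, F N n) atTop (𝓝 (∑' n : ℤ, Pi⁻¹ * term a b n)) :=
    tendsto_tsum_of_dominated_convergence hbound h2 (Eventually.of_forall h3)
  have hprod : Tendsto (fun N => ∑' n : ℤ, F N n) atTop
      (𝓝 (qPoch (-a) q * qPoch (-b) q)) := by
    rw [funext h1]
    exact (tendsto_A hab a).mul (tendsto_A hab b)
  have heq := tendsto_nhds_unique htan hprod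
  rw [tsum_mul_left] at heq
  have hfin : (∑' n : ℤ, term a b n) = Pi * (qPoch (-a) q * qPoch (-b) q) := by
    rw [← heq, ← mul_assoc, mul_inv_cancel₀ hPi0, one_mul]
  rw [hfin]; ring

-- from t12.lean
lemma qPoch_zero (x : ℂ) : qPoch x 0 = 1 - x := by
  rw [qPoch]
  rw [tprod_eq_prod (s := {0}) (fun n hn => by
    have : n ≠ 0 := by simpa using hn
    rw [zero_pow this, mul_zero, sub_zero])]
  simp

lemma term_zero (a b : ℂ) : term a b 0 = 1 := by norm_num [term]
lemma term_one (a b : ℂ) : term a b 1 = a := by norm_num [term]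
lemma term_negone (a b : ℂ) : term a b (-1) = b := by norm_num [term]

lemma tsum_a_zero (b : ℂ) : (∑' n : ℤ, term 0 b n) = 1 + b := by
  have hv : ∀ n ∉ ({0, -1} : Finset ℤ), term 0 b n = 0 := by
    intro n hn
    simp only [Finset.mem_insert, Finset.mem_singleton] at hn
    push_neg at hn
    have h2 := two_mul_tri' n
    have he : n * (n + 1) / 2 ≠ 0 := by
      intro h
      rw [h, mul_zero] at h2
      exact mul_ne_zero hn.1 (by omega : n + 1 ≠ 0) h2.symm
    rw [term, zero_zpow _ he, zero_mul]
  rw [tsum_eq_sum hv, Finset.sum_pair (by norm_num), term_zero, term_negone]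

lemma tsum_b_zero (a : ℂ) : (∑' n : ℤ, term a 0 n) = 1 + a := by
  have hv : ∀ n ∉ ({0, 1} : Finset ℤ), term a 0 n = 0 := by
    intro n hn
    simp only [Finset.mem_insert, Finset.mem_singleton] at hn
    push_neg at hn
    have h2 := two_mul_tri n
    have he : n * (n - 1) / 2 ≠ 0 := by
      intro h
      rw [h, mul_zero] at h2
      exact mul_ne_zero hn.1 (by omega : n - 1 ≠ 0) h2.symm
    rw [term, zero_zpow _ he, mul_zero]
  rw [tsum_eq_sum hv, Finset.sum_pair (by norm_num), term_zero, term_one]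


end JTP

theorem jacobi_triple_product (a b : ℂ) (hab : ‖a * b‖ < 1) :
    (∑' n : ℤ, a ^ (n * (n + 1) / 2) * b ^ (n * (n - 1) / 2))
      = qPoch (-a) (a * b) * qPoch (-b) (a * b) * qPoch (a * b) (a * b) := by
  by_cases ha : a = 0
  · subst ha
    show (∑' n : ℤ, JTP.term 0 b n) = _
    rw [JTP.tsum_a_zero, zero_mul, neg_zero, JTP.qPoch_zero, JTP.qPoch_zero]
    ring
  by_cases hb : b = 0
  · subst hb
    show (∑' n : ℤ, JTP.term a 0 n) = _
    rw [JTP.tsum_b_zero, mul_zero, neg_zero, JTP.qPoch_zero, JTP.qPoch_zero]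
    ring
  exact JTP.jacobi_ne ha hb hab
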